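/- For every k ≥ 1, every m ≥ p^k and every n ≥ 1, the element z_{m,n} belongs to Γ^{p^k}; consequently ⟨z_{m,n} : m ≥ p^k, n ≥ 1⟩ ≤ Γ^{p^k}. (The lower bound of Proposition 5.2 of the paper: ⟨z_{m,n} : m ≥ p^k, n ∈ ℕ⟩ ≤ 𝔊(p)^{p^k} ∩ Z.) -/

import Mathlib

/-!
Passing to `Γ / Γ^{p^k}`, it suffices to show `z_{m,n} = 1` when `Γ` has exponent dividing
`p^k`. As `Z` is central in `H` and contains the commutators of the generators `c_i`, we get
`[H, H] ≤ Z`, and the abelianization `Hᵃᵇ` has exponent `p`. Conjugation by `x` acts on `Hᵃᵇ`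
as `1 + S`, where `S` is the shift `c_i ↦ c_{i+1}`. Since `x^{-N} (x c)^N` is the product of
the conjugates `x^{-t} c x^t`, `t < N`, the relation `(x c_n)^{p^k} = x^{p^k} = 1` becomes
`∑_{t < p^k} (1 + S)^t c_n = ∑_s C(p^k, s + 1) S^s c_n = c_{n + p^k - 1} = 0` in `Hᵃᵇ`.
So `c_m ∈ [H, H] ≤ Z` for `m ≥ p^k`, and `z_{m,n} = [c_m, c_n] = 1`.
-/

namespace Paper

variable {G : Type*} [Group G]

/-- The paper's commutator `[a,b] = a⁻¹ b⁻¹ a b`. -/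
def pc {G : Type*} [Group G] (a b : G) : G := a⁻¹ * b⁻¹ * a * b

/-- The left-normed iterated commutator `[a, x, (r)…, x]`. -/
def itc {G : Type*} [Group G] (x a : G) : ℕ → G
  | 0 => a
  | r + 1 => pc (itc x a r) x

/-- `c_i`, where `c_1 = y` and `c_{i+1} = [c_i, x]`; equivalently `c_i = [y, x, (i-1)…, x]`. -/
def cc (x y : G) (i : ℕ) : G := itc x y (i - 1)

/-- `z_{m,n} = [c_m, c_n]`. -/
def zz (x y : G) (m n : ℕ) : G := pc (cc x y m) (cc x y n)

/-- `H = ⟨c_i : i ≥ 1⟩`. -/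
def Hsub (x y : G) : Subgroup G :=
  Subgroup.closure {g | ∃ i, 1 ≤ i ∧ g = cc x y i}

/-- `Z = ⟨z_{m,n} : m, n ≥ 1⟩` (odd-prime case). -/
def ZsubP (x y : G) : Subgroup G :=
  Subgroup.closure {g | ∃ m n, 1 ≤ m ∧ 1 ≤ n ∧ g = zz x y m n}

/-- `w_{i,j,k} = ∏_{t=1}^{p^k−1} [z_{i+t,j+t−1}, x, (p^k−1−t)…, x]`,
factors in order of increasing `t` (reindexed by `t ↦ t+1`). -/
def wwP (p : ℕ) (x y : G) (i j k : ℕ) : G :=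
  ((List.range (p ^ k - 1)).map
    (fun t => itc x (zz x y (i + t + 1) (j + t)) (p ^ k - 2 - t))).prod

/-- `d_k(h) = [h,x,(p^k−1)…,x]⁻¹ · x^{−p^k} · (xh)^{p^k}`. -/
def ddP (p : ℕ) (x y : G) (k : ℕ) (h : G) : G :=
  (itc x h (p ^ k - 1))⁻¹ * (x ^ p ^ k)⁻¹ * (x * h) ^ p ^ k

/-- `L_k`, the normal closure of `{w_{i,j,k} : i,j ≥ 1} ∪ {d_k(y)} ∪ {z_{m,n} : m ≥ p^k, n ≥ 1}`. -/
def LsubP (p : ℕ) (x y : G) (k : ℕ) : Subgroup G :=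
  Subgroup.normalClosure (({g | ∃ i j, 1 ≤ i ∧ 1 ≤ j ∧ g = wwP p x y i j k} ∪
      {ddP p x y k y}) ∪
    {g | ∃ m n, p ^ k ≤ m ∧ 1 ≤ n ∧ g = zz x y m n})

/-- `Γ^{p^k} = ⟨g^{p^k} : g ∈ Γ⟩`. -/
def powSubP (G : Type*) [Group G] (p k : ℕ) : Subgroup G :=
  Subgroup.closure {g | ∃ a : G, g = a ^ p ^ k}

/-- `Θ̃_k = ⟨z_{m,n} : m ≥ p^k, n ≥ 1⟩`. -/
def ThetaT (p : ℕ) (x y : G) (k : ℕ) : Subgroup G :=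
  Subgroup.closure {g | ∃ m n, p ^ k ≤ m ∧ 1 ≤ n ∧ g = zz x y m n}

/-- `[A, g] = ⟨[a,g] : a ∈ A⟩`. -/
def commSub (A : Subgroup G) (g : G) : Subgroup G :=
  Subgroup.closure {c | ∃ a ∈ A, c = pc a g}

/-- The `r`-fold iterate `[A, g, (r)…, g]`. -/
def itcSub (A : Subgroup G) (g : G) : ℕ → Subgroup G
  | 0 => A
  | r + 1 => commSub (itcSub A g r) g

/-- `Λ̃_k`. -/
def LambdaT (p : ℕ) (x y : G) (k : ℕ) : Subgroup G :=
  Subgroup.closure {g | ∃ m n, g = itc (x ^ p ^ (k - 1)) (zz x y m n) (p - 1) ∧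
    ((p ^ (k - 1) ≤ m ∧ m < p ^ k ∧
        max 1 (m - m / p ^ (k - 1) * p ^ (k - 1)) ≤ n ∧ n < p ^ (k - 1)) ∨
      (∃ i, 2 ≤ i ∧ i ≤ p - 2 ∧ m = i * p ^ (k - 1) ∧ n = p ^ (k - 1)))}

/-- `w̃_{i,j,k} = ∏_{t=1}^{p^k−p^{k−1}} [z_{i+t,j+t−1}, x, (p^k−p^{k−1}−t)…, x]`,
factors in order of increasing `t` (reindexed by `t ↦ t+1`). -/
def wwT (p : ℕ) (x y : G) (i j k : ℕ) : G :=
  ((List.range (p ^ k - p ^ (k - 1))).map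
    (fun t => itc x (zz x y (i + t + 1) (j + t)) (p ^ k - p ^ (k - 1) - 1 - t))).prod

/-- `d̃_k(h) = [h,x,(p^k−p^{k−1})…,x]⁻¹ · x^{−p^k} · (x^{p^{k−1}}h)^p`. -/
def ddT (p : ℕ) (x y : G) (k : ℕ) (h : G) : G :=
  (itc x h (p ^ k - p ^ (k - 1)))⁻¹ * (x ^ p ^ k)⁻¹ * (x ^ p ^ (k - 1) * h) ^ p

/-- `L̃_k`, the normal closure of `{w̃_{i,j,k} : i,j ≥ p^{k−1}} ∪ {d̃_k(y)}`. -/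
def LsubT (p : ℕ) (x y : G) (k : ℕ) : Subgroup G :=
  Subgroup.normalClosure
    ({g | ∃ i j, p ^ (k - 1) ≤ i ∧ p ^ (k - 1) ≤ j ∧ g = wwT p x y i j k} ∪
      {ddT p x y k y})

/-- `Γ_{(k)} = ⟨c_j (j ≥ p^{k−1}), z_{m,n} (m > n ≥ 1, m + n ≥ p^{k−1})⟩`. -/
def GammaK (p : ℕ) (x y : G) (k : ℕ) : Subgroup G :=
  Subgroup.closure ({g | ∃ j, p ^ (k - 1) ≤ j ∧ g = cc x y j} ∪
    {g | ∃ m n, 1 ≤ n ∧ n < m ∧ p ^ (k - 1) ≤ m + n ∧ g = zz x y m n})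

open Finset
open scoped commutatorElement

section Binomial

variable {M : Type*} [CommMonoid M] (φ : M →* M) {e : ℕ → M}

theorem prod_range_iterate_eq_prod_pow_choose (he : ∀ i, φ (e i) = e i * e (i + 1))
    (N n : ℕ) :
    ∏ t ∈ range N, φ^[t] (e n) = ∏ s ∈ range N, e (n + s) ^ N.choose (s + 1) := by
  induction N with
  | zero => simp
  | succ N ih =>
    have hshift : ∏ t ∈ range N, φ^[t + 1] (e n) =
        (∏ s ∈ range N, e (n + s) ^ N.choose (s + 1)) *
          ∏ s ∈ range N, e (n + (s + 1)) ^ N.choose (s + 1) := by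
      simp only [Function.iterate_succ_apply', ← map_prod, ih]
      simp only [map_prod, map_pow, he, mul_pow, prod_mul_distrib, add_assoc]
    simp only [Nat.choose_succ_succ', pow_add, prod_mul_distrib]
    rw [prod_range_succ', hshift, prod_range_succ' (fun s => e (n + s) ^ N.choose s),
      prod_range_succ (fun s => e (n + s) ^ N.choose (s + 1)), Nat.choose_succ_self]
    simp only [Function.iterate_zero_apply, add_zero, Nat.choose_zero_right, pow_one, pow_zero,
      mul_one]
    ac_rfl

theorem prod_range_prime_pow_iterate_eq (he : ∀ i, φ (e i) = e i * e (i + 1)) {p : ℕ}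
    (hp : p.Prime) (hM : ∀ a : M, a ^ p = 1) (k n : ℕ) :
    ∏ t ∈ range (p ^ k), φ^[t] (e n) = e (n + (p ^ k - 1)) := by
  have hpos : 0 < p ^ k := pow_pos hp.pos k
  rw [prod_range_iterate_eq_prod_pow_choose φ he,
    prod_eq_single_of_mem (p ^ k - 1) (mem_range.2 (by omega))]
  · rw [Nat.sub_add_cancel hpos, Nat.choose_self, pow_one]
  · intro s hs hne
    obtain ⟨c, hc⟩ := hp.dvd_choose_pow (n := k) s.succ_ne_zero (by rw [mem_range] at hs; omega)
    rw [hc, pow_mul, hM, one_pow]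

end Binomial

section Commutator

variable {S : Set G} {Z : Subgroup G}

theorem inv_pc (a b : G) : (pc a b)⁻¹ = pc b a := by
  simp only [pc]
  group

theorem pc_eq_commutatorElement (a b : G) : pc a b = ⁅a⁻¹, b⁻¹⁆ := by
  simp only [pc, commutatorElement_def, inv_inv]

theorem pc_mem_of_mem_closure_right (hZ : ∀ z ∈ Z, ∀ h ∈ Subgroup.closure S, z * h = h * z)
    {a : G} (ha : ∀ s ∈ S, pc a s ∈ Z) {b : G} (hb : b ∈ Subgroup.closure S) :
    pc a b ∈ Z := by
  induction hb using Subgroup.closure_induction with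
  | mem s hs => exact ha s hs
  | one => simp [pc]
  | mul b c _ hc ihb ihc =>
    have hpc : pc a (b * c) = pc a c * (c⁻¹ * pc a b * c) := by
      simp only [pc]
      group
    rw [hpc, mul_assoc c⁻¹, hZ _ ihb c hc, inv_mul_cancel_left]
    exact mul_mem ihc ihb
  | inv b hb ihb =>
    have hpc : pc a b⁻¹ = b * (pc a b)⁻¹ * b⁻¹ := by
      simp only [pc]
      group
    rw [hpc, ← hZ _ (inv_mem ihb) b hb, mul_inv_cancel_right]
    exact inv_mem ihb

theorem pc_mem_of_mem_closure (hZ : ∀ z ∈ Z, ∀ h ∈ Subgroup.closure S, z * h = h * z)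
    (hS : ∀ s ∈ S, ∀ t ∈ S, pc s t ∈ Z) {a b : G} (ha : a ∈ Subgroup.closure S)
    (hb : b ∈ Subgroup.closure S) : pc a b ∈ Z := by
  have hSb : ∀ s ∈ S, pc b s ∈ Z := fun s hs => by
    rw [← inv_pc]
    exact inv_mem (pc_mem_of_mem_closure_right hZ (hS s hs) hb)
  rw [← inv_pc]
  exact inv_mem (pc_mem_of_mem_closure_right hZ hSb ha)

end Commutator

section Abelianization

variable {H : Subgroup G} {x : G} (φ : H →* H)

theorem exists_coe_eq_inv_pow_mul_pow (hφ : ∀ h : H, (φ h : G) = x⁻¹ * h * x) (h : H)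
    (N : ℕ) : ∃ q : H, (q : G) = (x ^ N)⁻¹ * (x * h) ^ N ∧
      Abelianization.of q =
        ∏ t ∈ range N, (Abelianization.map φ)^[t] (Abelianization.of h) := by
  induction N with
  | zero => exact ⟨1, by simp, by simp⟩
  | succ N ih =>
    obtain ⟨q, hq, hqprod⟩ := ih
    refine ⟨φ q * h, ?_, ?_⟩
    · rw [Subgroup.coe_mul, hφ, hq, pow_succ, pow_succ]
      group
    · simp only [map_mul, ← Abelianization.map_of, hqprod, map_prod, prod_range_succ',
        ← Function.iterate_succ_apply' (Abelianization.map φ), Function.iterate_zero_apply]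

end Abelianization

section Generators

variable (x y : G)

theorem conj_cc_succ (i : ℕ) : x⁻¹ * cc x y (i + 1) * x = cc x y (i + 1) * cc x y (i + 2) := by
  show x⁻¹ * itc x y i * x = itc x y i * pc (itc x y i) x
  simp only [pc]
  group

-- `cc x y 0 = cc x y 1`, because `0 - 1 = 0` in `ℕ`.
theorem cc_mem_Hsub (i : ℕ) : cc x y i ∈ Hsub x y := by
  cases i with
  | zero => exact Subgroup.subset_closure ⟨1, le_rfl, rfl⟩
  | succ i => exact Subgroup.subset_closure ⟨i + 1, by omega, rfl⟩

theorem conj_mem_Hsub {h : G} (hh : h ∈ Hsub x y) : x⁻¹ * h * x ∈ Hsub x y := by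
  suffices Hsub x y ≤ (Hsub x y).comap (MulAut.conj x⁻¹).toMonoidHom by
    simpa using this hh
  refine (Subgroup.closure_le _).2 ?_
  rintro _ ⟨i, hi, rfl⟩
  obtain ⟨j, rfl⟩ : ∃ j, i = j + 1 := ⟨i - 1, by omega⟩
  simpa [conj_cc_succ] using mul_mem (cc_mem_Hsub x y (j + 1)) (cc_mem_Hsub x y (j + 2))

def conjHsub : Hsub x y →* Hsub x y where
  toFun h := ⟨x⁻¹ * h * x, conj_mem_Hsub x y h.2⟩
  map_one' := by ext; simp
  map_mul' a b := by ext; simp only [Subgroup.coe_mul]; group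

variable {x y}

theorem pc_mem_ZsubP (hca : ∀ z ∈ ZsubP x y, ∀ h ∈ Hsub x y, z * h = h * z) {a b : G}
    (ha : a ∈ Hsub x y) (hb : b ∈ Hsub x y) : pc a b ∈ ZsubP x y := by
  refine pc_mem_of_mem_closure hca ?_ ha hb
  rintro _ ⟨i, hi, rfl⟩ _ ⟨j, hj, rfl⟩
  exact Subgroup.subset_closure ⟨i, j, hi, hj, rfl⟩

theorem coe_mem_ZsubP_of_of_eq_one (hca : ∀ z ∈ ZsubP x y, ∀ h ∈ Hsub x y, z * h = h * z)
    {h : Hsub x y} (h1 : Abelianization.of h = 1) : (h : G) ∈ ZsubP x y := by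
  have hcomm : commutator (Hsub x y) ≤ (ZsubP x y).subgroupOf (Hsub x y) := by
    rw [commutator, Subgroup.commutator_le]
    intro a _ b _
    rw [Subgroup.mem_subgroupOf, ← (Hsub x y).coe_subtype, map_commutatorElement,
      Subgroup.coe_subtype, ← inv_inv (a : G), ← inv_inv (b : G), ← pc_eq_commutatorElement]
    exact pc_mem_ZsubP hca (inv_mem a.2) (inv_mem b.2)
  rw [← MonoidHom.mem_ker, Abelianization.ker_of] at h1
  exact Subgroup.mem_subgroupOf.1 (hcomm h1)

end Generators

section ExponentQuotient

variable (x y : G) {p k : ℕ}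

theorem cc_mem_ZsubP_of_pow_eq_one (hp : p.Prime)
    (hca : ∀ z ∈ ZsubP x y, ∀ h ∈ Hsub x y, z * h = h * z)
    (hHp : ∀ h ∈ Hsub x y, h ^ p = 1) (hexp : ∀ g : G, g ^ p ^ k = 1) {m : ℕ}
    (hm : p ^ k ≤ m) : cc x y m ∈ ZsubP x y := by
  obtain ⟨n, rfl⟩ : ∃ n, m = n + (p ^ k - 1) + 1 :=
    ⟨m - p ^ k, by have := pow_pos hp.pos k; omega⟩
  set e : ℕ → Abelianization (Hsub x y) := fun i =>
    Abelianization.of ⟨cc x y (i + 1), cc_mem_Hsub x y _⟩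
  have he : ∀ i, Abelianization.map (conjHsub x y) (e i) = e i * e (i + 1) := fun i => by
    rw [Abelianization.map_of, ← map_mul]
    exact congrArg _ (Subtype.ext (conj_cc_succ x y i))
  have hA : ∀ a : Abelianization (Hsub x y), a ^ p = 1 := fun a =>
    QuotientGroup.induction_on a fun h => by
      change Abelianization.of h ^ p = 1
      rw [← map_pow, show h ^ p = 1 from Subtype.ext (hHp h h.2), map_one]
  obtain ⟨q, hq, hqprod⟩ := exists_coe_eq_inv_pow_mul_pow (conjHsub x y) (fun _ => rfl)
    ⟨_, cc_mem_Hsub x y (n + 1)⟩ (p ^ k)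
  have hq1 : q = 1 := Subtype.ext (by rw [hq, hexp, hexp, inv_one, one_mul, Subgroup.coe_one])
  have hem : e (n + (p ^ k - 1)) = 1 := by
    rw [← prod_range_prime_pow_iterate_eq _ he hp hA, ← hqprod, hq1, map_one]
  exact coe_mem_ZsubP_of_of_eq_one hca hem

theorem zz_eq_one_of_pow_eq_one (hp : p.Prime)
    (hca : ∀ z ∈ ZsubP x y, ∀ h ∈ Hsub x y, z * h = h * z)
    (hHp : ∀ h ∈ Hsub x y, h ^ p = 1) (hexp : ∀ g : G, g ^ p ^ k = 1) {m : ℕ}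
    (hm : p ^ k ≤ m) (n : ℕ) : zz x y m n = 1 := by
  have hcomm := hca _ (cc_mem_ZsubP_of_pow_eq_one x y hp hca hHp hexp hm) _ (cc_mem_Hsub x y n)
  rw [zz, pc_eq_commutatorElement, commutatorElement_eq_one_iff_commute]
  exact Commute.inv_inv hcomm

end ExponentQuotient

section Functoriality

variable {M : Type*} [Group M] (f : G →* M) (x y : G)

theorem map_pc (a b : G) : f (pc a b) = pc (f a) (f b) := by
  simp [pc]

theorem map_itc (a : G) (r : ℕ) : f (itc x a r) = itc (f x) (f a) r := by
  induction r with
  | zero => rfl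
  | succ r ih => rw [itc, itc, map_pc, ih]

theorem map_cc (i : ℕ) : f (cc x y i) = cc (f x) (f y) i :=
  map_itc f x y (i - 1)

theorem map_zz (m n : ℕ) : f (zz x y m n) = zz (f x) (f y) m n := by
  rw [zz, map_pc, map_cc, map_cc, zz]

theorem map_Hsub : (Hsub x y).map f = Hsub (f x) (f y) := by
  rw [Hsub, Hsub, MonoidHom.map_closure]
  congr 1
  ext g
  constructor
  · rintro ⟨_, ⟨i, hi, rfl⟩, rfl⟩
    exact ⟨i, hi, map_cc f x y i⟩
  · rintro ⟨i, hi, rfl⟩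
    exact ⟨_, ⟨i, hi, rfl⟩, map_cc f x y i⟩

theorem map_ZsubP : (ZsubP x y).map f = ZsubP (f x) (f y) := by
  rw [ZsubP, ZsubP, MonoidHom.map_closure]
  congr 1
  ext g
  constructor
  · rintro ⟨_, ⟨m, n, hm, hn, rfl⟩, rfl⟩
    exact ⟨m, n, hm, hn, map_zz f x y m n⟩
  · rintro ⟨m, n, hm, hn, rfl⟩
    exact ⟨_, ⟨m, n, hm, hn, rfl⟩, map_zz f x y m n⟩

variable {x y}

theorem ZsubP_commute_Hsub_map (hca : ∀ z ∈ ZsubP x y, ∀ h ∈ Hsub x y, z * h = h * z) :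
    ∀ z ∈ ZsubP (f x) (f y), ∀ h ∈ Hsub (f x) (f y), z * h = h * z := by
  rw [← map_ZsubP, ← map_Hsub]
  rintro _ ⟨z, hz, rfl⟩ _ ⟨h, hh, rfl⟩
  rw [← map_mul, ← map_mul, hca z hz h hh]

theorem Hsub_pow_eq_one_map {p : ℕ} (hHp : ∀ h ∈ Hsub x y, h ^ p = 1) :
    ∀ h ∈ Hsub (f x) (f y), h ^ p = 1 := by
  rw [← map_Hsub]
  rintro _ ⟨h, hh, rfl⟩
  rw [← map_pow, hHp h hh, map_one]

end Functoriality

instance powSubP_characteristic (p k : ℕ) : (powSubP G p k).Characteristic := by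
  refine Subgroup.characteristic_iff_map_le.2 fun ϕ => ?_
  rw [powSubP, MonoidHom.map_closure, Subgroup.closure_le]
  rintro _ ⟨_, ⟨a, rfl⟩, rfl⟩
  exact Subgroup.subset_closure ⟨ϕ a, map_pow ϕ a _⟩

theorem pow_eq_one_of_quotient_powSubP (p k : ℕ) (g : G ⧸ powSubP G p k) : g ^ p ^ k = 1 :=
  QuotientGroup.induction_on g fun a =>
    (QuotientGroup.eq_one_iff _).2 (Subgroup.subset_closure ⟨a, rfl⟩)

theorem zz_mem_powers_odd_general (p : ℕ) (hp : p.Prime) (x y : G)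
    (hca : ∀ z ∈ ZsubP x y, ∀ h ∈ Hsub x y, z * h = h * z)
    (hHp : ∀ h ∈ Hsub x y, h ^ p = 1)
    (k : ℕ) :
    (∀ m n : ℕ, p ^ k ≤ m → 1 ≤ n → zz x y m n ∈ powSubP G p k) ∧
      Subgroup.closure {g | ∃ m n, p ^ k ≤ m ∧ 1 ≤ n ∧ g = zz x y m n} ≤
        powSubP G p k := by
  have hmem : ∀ m n : ℕ, p ^ k ≤ m → 1 ≤ n → zz x y m n ∈ powSubP G p k := by
    intro m n hm _
    set π := QuotientGroup.mk' (powSubP G p k)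
    rw [← QuotientGroup.eq_one_iff, ← QuotientGroup.mk'_apply, map_zz]
    exact zz_eq_one_of_pow_eq_one (π x) (π y) hp (ZsubP_commute_Hsub_map π hca)
      (Hsub_pow_eq_one_map π hHp) (pow_eq_one_of_quotient_powSubP p k) hm n
  refine ⟨hmem, (Subgroup.closure_le _).2 ?_⟩
  rintro _ ⟨m, n, hm, hn, rfl⟩
  exact hmem m n hm hn

theorem zz_mem_powers_odd (p : ℕ) (hp : p.Prime) (hodd : Odd p) (x y : G)
    (hca : ∀ z ∈ ZsubP x y, ∀ h ∈ Hsub x y, z * h = h * z)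
    (hHp : ∀ h ∈ Hsub x y, h ^ p = 1)
    (k : ℕ) (hk : 1 ≤ k) :
    (∀ m n : ℕ, p ^ k ≤ m → 1 ≤ n → zz x y m n ∈ powSubP G p k) ∧
      Subgroup.closure {g | ∃ m n, p ^ k ≤ m ∧ 1 ≤ n ∧ g = zz x y m n} ≤
        powSubP G p k :=
  zz_mem_powers_odd_general p hp x y hca hHp k

end Paper
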